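/- arXiv:1107.1939 — 4 statements merged into one kernel-verified Lean document; each statement's English description precedes it below -/
import Mathlib

section
/- For r, m, r', m' ∈ K with m ≠ 0, Tr(m) = −N(r), and Tr(m') = −N(r'), conjugation by w(r,m) maps upper unipotent to lower unipotent elements: w(r,m) · x₊(r',m') · w(r,m)⁻¹ = x₋( r̄'·m̄/m² , m'/N(m) ). In particular the parameters on the right satisfy Tr(m'/N(m)) = −N(r̄'·m̄/m²). -/
open Matrix

/-- The upper unipotent matrix `x₊(r,m)`. -/
def xPlus {K : Type*} [Field K] (conj : K →+* K) (r m : K) : Matrix (Fin 3) (Fin 3) K :=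
  !![1, r, m; 0, 1, -conj r; 0, 0, 1]

/-- The lower unipotent matrix `x₋(r,m)`. -/
def xMinus {K : Type*} [Field K] (conj : K →+* K) (r m : K) : Matrix (Fin 3) (Fin 3) K :=
  !![1, 0, 0; r, 1, 0; m, -conj r, 1]

/-- The Weyl-type matrix `w(r,m) = [[0,0,m],[0,−m̄/m,0],[m̄⁻¹,0,0]]`. -/
def wMat {K : Type*} [Field K] (conj : K →+* K) (m : K) : Matrix (Fin 3) (Fin 3) K :=
  !![0, 0, m; 0, -conj m / m, 0; (conj m)⁻¹, 0, 0]

/-- Conjugation by `w(r,m)` maps upper unipotents to lower unipotents: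
`w(r,m)·x₊(r',m')·w(r,m)⁻¹ = x₋(r̄'·m̄/m², m'/N(m))`, and the parameters on the
right satisfy `Tr(m'/N(m)) = −N(r̄'·m̄/m²)`. -/
theorem stmt3 {K : Type*} [Field K] [CharZero K] (conj : K →+* K)
    (hinv : ∀ x : K, conj (conj x) = x)
    (r m r' m' : K) (hm0 : m ≠ 0)
    (hm : m + conj m = -(r * conj r)) (hm' : m' + conj m' = -(r' * conj r')) :
    wMat conj m * xPlus conj r' m' * (wMat conj m)⁻¹ =
      xMinus conj (conj r' * conj m / m ^ 2) (m' / (m * conj m)) ∧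
    m' / (m * conj m) + conj (m' / (m * conj m)) =
      -((conj r' * conj m / m ^ 2) * conj (conj r' * conj m / m ^ 2)) := by
  have hmc0 : conj m ≠ 0 := fun h => hm0 (by rw [← hinv m, h, map_zero])
  have hdet : IsUnit (wMat conj m).det := by
    simp only [wMat, Matrix.det_fin_three, Matrix.cons_val', Matrix.cons_val_zero,
      Matrix.cons_val_one, Matrix.head_cons, Matrix.empty_val', Matrix.cons_val_fin_one,
      Matrix.head_fin_const, Matrix.cons_val_two, Matrix.tail_cons, Matrix.head_fin_const, Matrix.of_apply]
    field_simp
    simp [hm0, hmc0]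
  constructor
  · haveI := (wMat conj m).invertibleOfIsUnitDet hdet
    rw [Matrix.mul_inv_eq_iff_eq_mul_of_invertible]
    ext i j
    fin_cases i <;> fin_cases j <;>
      simp [wMat, xPlus, xMinus, Matrix.mul_apply, Fin.sum_univ_succ] <;>
      field_simp <;> (try simp only [hinv]) <;>
      first
        | ring
        | linear_combination -conj m * hm'
        | linear_combination conj m * hm'
        | linear_combination hm'
        | linear_combination -m * hm'
        | linear_combination m * hm'
  · have h1 : conj (m' / (m * conj m)) = conj m' / (conj m * m) := by
      rw [map_div₀, _root_.map_mul, hinv]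
    have h2 : conj (conj r' * conj m / m ^ 2) = r' * m / conj m ^ 2 := by
      rw [map_div₀, _root_.map_mul, hinv, map_pow, hinv]
    rw [h1, h2]
    field_simp
    first
      | linear_combination ((conj m)^3*m^3) * hm'
      | linear_combination ((conj m)^3*m^3 - m*conj m) * hm'
      | linear_combination ((conj m)^3*m^3 + m*conj m) * hm'
      | linear_combination (m*conj m) * hm'
      | linear_combination ((conj m)^2*m^2) * hm'
      | linear_combination hm'
end

section
/- For every λ ∈ K×, the torus element h(λ) factors through the Weyl-type elements: h(λ) = w(y(λ), δ₁(λ)) · w(0, δ₂(λ))⁻¹, where y(λ) = 0 if λ ∈ k× and y(λ) = 1 otherwise, and δ₁, δ₂ are as defined. (Both factors are well-defined elements of SU(2,1)(k), i.e. Tr(δ₁(λ)) = −N(y(λ)) and Tr(δ₂(λ)) = 0.) -/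
open Matrix

def hMat {K : Type*} [Field K] (conj : K →+* K) (l : K) : Matrix (Fin 3) (Fin 3) K :=
  !![l, 0, 0; 0, conj l / l, 0; 0, 0, (conj l)⁻¹]

lemma hw_mul {K : Type*} [Field K] (conj : K →+* K) (l m : K) :
    hMat conj l * wMat conj m = wMat conj (l * m) := by
  unfold hMat wMat
  ext i j
  fin_cases i <;> fin_cases j <;>
    simp [Matrix.mul_apply, Fin.sum_univ_three, _root_.map_mul, mul_inv, Matrix.vecHead, Matrix.vecTail] <;> ring

lemma w_det {K : Type*} [Field K] (conj : K →+* K) (m : K) (hm : m ≠ 0) :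
    (wMat conj m).det = 1 := by
  have hcm : conj m ≠ 0 := (map_ne_zero conj).mpr hm
  simp [wMat, Matrix.det_fin_three]
  field_simp

lemma factor {K : Type*} [Field K] (conj : K →+* K) (l m d : K) (hm : m ≠ 0)
    (hd : d = l * m) : hMat conj l = wMat conj d * (wMat conj m)⁻¹ := by
  have hdet : IsUnit (wMat conj m).det := by rw [w_det conj m hm]; exact isUnit_one
  calc hMat conj l = hMat conj l * (wMat conj m * (wMat conj m)⁻¹) := by
        rw [Matrix.mul_nonsing_inv _ hdet, mul_one]
    _ = wMat conj d * (wMat conj m)⁻¹ := by rw [← mul_assoc, hw_mul, hd]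

/-- For every `λ ∈ K×`: `h(λ) = w(y(λ), δ₁(λ)) · w(0, δ₂(λ))⁻¹`, where
`y(λ) = 0` if `λ ∈ k×` and `y(λ) = 1` otherwise; both factors are well-defined:
`Tr(δ₁(λ)) = −N(y(λ))` (i.e. `0` if `λ ∈ k×`, `−1` otherwise) and `Tr(δ₂(λ)) = 0`. -/
theorem stmt6 {K : Type*} [Field K] [CharZero K] (conj : K →+* K)
    (hinv : ∀ x : K, conj (conj x) = x)
    (θ₀ : K) (hθ0 : θ₀ ≠ 0) (hθ : conj θ₀ = -θ₀)
    (hgen : ∀ lam : K, ∃ a b : K, conj a = a ∧ conj b = b ∧ lam = a + b * θ₀)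
    (δ₁ δ₂ : K → K)
    (hδk : ∀ lam : K, lam ≠ 0 → conj lam = lam → δ₁ lam = lam * θ₀ ∧ δ₂ lam = θ₀)
    (hδn : ∀ a b : K, conj a = a → conj b = b → b ≠ 0 →
      δ₁ (a + b * θ₀) = -(1 / 2) - a / (2 * b * θ₀) ∧
      δ₂ (a + b * θ₀) = -(1 / (2 * b * θ₀))) :
    ∀ lam : K, lam ≠ 0 →
      (δ₂ lam + conj (δ₂ lam) = 0) ∧
      (conj lam = lam → δ₁ lam + conj (δ₁ lam) = 0) ∧
      (conj lam ≠ lam → δ₁ lam + conj (δ₁ lam) = -1) ∧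
      hMat conj lam = wMat conj (δ₁ lam) * (wMat conj (δ₂ lam))⁻¹ := by
  intro lam hlam
  obtain ⟨a, b, ha, hb, hab⟩ := hgen lam
  by_cases hb0 : b = 0
  · -- lam = a, fixed by conj
    have hfix : conj lam = lam := by rw [hab, hb0]; simp [ha]
    obtain ⟨h1, h2⟩ := hδk lam hlam hfix
    refine ⟨by rw [h2, hθ]; ring, fun _ => by rw [h1, _root_.map_mul, hθ, hfix]; ring,
      fun h => absurd hfix h, ?_⟩
    exact factor conj lam (δ₂ lam) (δ₁ lam) (h2 ▸ hθ0) (by rw [h1, h2])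
  · obtain ⟨h1, h2⟩ := hδn a b ha hb hb0
    rw [← hab] at h1 h2
    have h2b : (2 : K) * b * θ₀ ≠ 0 := by
      simp [hb0, hθ0, two_ne_zero]
    have hnfix : conj lam ≠ lam := by
      rw [hab, map_add, _root_.map_mul, ha, hb, hθ]
      intro h
      apply h2b
      linear_combination -h
    have hc2 : conj (2 * b * θ₀) = -(2 * b * θ₀) := by
      rw [_root_.map_mul, _root_.map_mul, hb, hθ, map_ofNat]; ring
    refine ⟨?_, fun h => absurd h hnfix, fun _ => ?_, ?_⟩
    · rw [h2, map_neg, map_div₀, _root_.map_one, hc2]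
      field_simp
      ring
    · rw [h1, map_sub, map_neg, map_div₀, map_div₀, ha, hc2, _root_.map_one, map_ofNat]
      field_simp
      ring
    · refine factor conj lam (δ₂ lam) (δ₁ lam) ?_ ?_
      · exact h2 ▸ (neg_ne_zero.mpr (one_div_ne_zero h2b))
      · rw [h1, h2, hab]
        field_simp
        ring
end

section
/- Let γ ∈ SU(2,1)(k) have first column (a,b,c)ᵗ and bottom row (c,d,e), and suppose the (3,1)-entry c is nonzero. Then γ admits the Bruhat decomposition γ = x₊(−b̄/c̄, a/c) · h(1/(c̄θ₀)) · w(0,θ₀) · x₊(d/c, e/c), where all factors are well-defined elements of SU(2,1)(k); in particular Tr(a/c) = −N(b/c) and Tr(e/c) = −N(d/c). -/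
open Matrix

/-- The antidiagonal 3×3 matrix `J'`. -/
def Jmat (K : Type*) [Field K] : Matrix (Fin 3) (Fin 3) K :=
  !![0, 0, 1; 0, 1, 0; 1, 0, 0]

/-- `SU(2,1)(k) = {ν ∈ SL₃(K) : νᵀ J' ν̄ = J'}`. -/
def SU21 {K : Type*} [Field K] (conj : K →+* K) : Set (Matrix (Fin 3) (Fin 3) K) :=
  {ν | ν.det = 1 ∧ νᵀ * Jmat K * ν.map conj = Jmat K}

set_option maxHeartbeats 2000000

/-- Bruhat decomposition: if `γ ∈ SU(2,1)(k)` has first column `(a,b,c)ᵗ`,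
bottom row `(c,d,e)` and `c = γ 2 0 ≠ 0`, then
`γ = x₊(−b̄/c̄, a/c) · h(1/(c̄θ₀)) · w(0,θ₀) · x₊(d/c, e/c)`, with
`Tr(a/c) = −N(b/c)` and `Tr(e/c) = −N(d/c)`. -/
theorem stmt7 {K : Type*} [Field K] [CharZero K] (conj : K →+* K)
    (hinv : ∀ x : K, conj (conj x) = x)
    (θ₀ : K) (hθ0 : θ₀ ≠ 0) (hθ : conj θ₀ = -θ₀)
    (γ : Matrix (Fin 3) (Fin 3) K) (hγ : γ ∈ SU21 conj) (hc : γ 2 0 ≠ 0) :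
    (γ 0 0 / γ 2 0 + conj (γ 0 0 / γ 2 0) =
      -((γ 1 0 / γ 2 0) * conj (γ 1 0 / γ 2 0))) ∧
    (γ 2 2 / γ 2 0 + conj (γ 2 2 / γ 2 0) =
      -((γ 2 1 / γ 2 0) * conj (γ 2 1 / γ 2 0))) ∧
    γ = xPlus conj (-conj (γ 1 0) / conj (γ 2 0)) (γ 0 0 / γ 2 0) *
        hMat conj (1 / (conj (γ 2 0) * θ₀)) *
        wMat conj θ₀ *
        xPlus conj (γ 2 1 / γ 2 0) (γ 2 2 / γ 2 0) := by
  obtain ⟨hdet, hJ⟩ := hγ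
  have hcc : conj (γ 2 0) ≠ 0 := fun h => hc (by rw [← hinv (γ 2 0), h, map_zero])
  have hconj : γ.map conj = Jmat K * (adjugate γ)ᵀ * Jmat K := by
    have hJJ : Jmat K * Jmat K = (1 : Matrix (Fin 3) (Fin 3) K) := by
      rw [Jmat, Matrix.mul_fin_three, Matrix.one_fin_three]
      norm_num
    have hadj : (adjugate γ)ᵀ * γᵀ = 1 := by
      rw [← Matrix.transpose_mul, Matrix.mul_adjugate, hdet, one_smul, Matrix.transpose_one]
    have h1 : (adjugate γ)ᵀ * (γᵀ * Jmat K * γ.map conj) = (adjugate γ)ᵀ * Jmat K := by rw [hJ]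
    rw [← Matrix.mul_assoc, ← Matrix.mul_assoc, hadj, Matrix.one_mul] at h1
    calc γ.map conj = Jmat K * Jmat K * γ.map conj := by rw [hJJ, Matrix.one_mul]
      _ = Jmat K * (Jmat K * γ.map conj) := by rw [Matrix.mul_assoc]
      _ = Jmat K * ((adjugate γ)ᵀ * Jmat K) := by rw [h1]
      _ = Jmat K * (adjugate γ)ᵀ * Jmat K := by rw [Matrix.mul_assoc]
  rw [Matrix.det_fin_three] at hdet
  have entry : ∀ i j, conj (γ i j) = (Jmat K * (adjugate γ)ᵀ * Jmat K) i j := by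
    intro i j
    rw [← hconj]; rfl
  have ha' : conj (γ 0 0) = γ 0 0 * γ 1 1 - γ 0 1 * γ 1 0 := by
    have := entry 0 0
    simp [Jmat, adjugate_fin_three, Matrix.mul_apply, Fin.sum_univ_succ, Matrix.transpose_apply, Matrix.cons_val_two, Matrix.vecHead, Matrix.vecTail, Matrix.vecMul, dotProduct, Fin.sum_univ_three] at this
    linear_combination this
  have hb' : conj (γ 1 0) = γ 0 1 * γ 2 0 - γ 0 0 * γ 2 1 := by
    have := entry 1 0
    simp [Jmat, adjugate_fin_three, Matrix.mul_apply, Fin.sum_univ_succ, Matrix.transpose_apply, Matrix.cons_val_two, Matrix.vecHead, Matrix.vecTail, Matrix.vecMul, dotProduct, Fin.sum_univ_three] at this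
    linear_combination this
  have hc' : conj (γ 2 0) = γ 1 0 * γ 2 1 - γ 1 1 * γ 2 0 := by
    have := entry 2 0
    simp [Jmat, adjugate_fin_three, Matrix.mul_apply, Fin.sum_univ_succ, Matrix.transpose_apply, Matrix.cons_val_two, Matrix.vecHead, Matrix.vecTail, Matrix.vecMul, dotProduct, Fin.sum_univ_three] at this
    linear_combination this
  have hd' : conj (γ 2 1) = γ 1 2 * γ 2 0 - γ 1 0 * γ 2 2 := by
    have := entry 2 1
    simp [Jmat, adjugate_fin_three, Matrix.mul_apply, Fin.sum_univ_succ, Matrix.transpose_apply, Matrix.cons_val_two, Matrix.vecHead, Matrix.vecTail, Matrix.vecMul, dotProduct, Fin.sum_univ_three] at this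
    linear_combination this
  have he' : conj (γ 2 2) = γ 1 1 * γ 2 2 - γ 1 2 * γ 2 1 := by
    have := entry 2 2
    simp [Jmat, adjugate_fin_three, Matrix.mul_apply, Fin.sum_univ_succ, Matrix.transpose_apply, Matrix.cons_val_two, Matrix.vecHead, Matrix.vecTail, Matrix.vecMul, dotProduct, Fin.sum_univ_three] at this
    linear_combination this
  have hcc2 : γ 1 0 * γ 2 1 - γ 1 1 * γ 2 0 ≠ 0 := hc' ▸ hcc
  have hcc3 : γ 2 1 * γ 1 0 - γ 2 0 * γ 1 1 ≠ 0 := by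
    rw [mul_comm (γ 2 1), mul_comm (γ 2 0)]; exact hcc2
  have hcc4 : -(γ 2 0 * γ 1 1) + γ 1 0 * γ 2 1 ≠ 0 := by
    rw [neg_add_eq_sub, mul_comm (γ 2 0)]; exact hcc2
  have hcc5 : -(γ 2 0 * γ 1 1) + γ 2 1 * γ 1 0 ≠ 0 := by
    rw [neg_add_eq_sub, mul_comm (γ 2 0), mul_comm (γ 2 1)]; exact hcc2
  have hcc6 : γ 1 0 * γ 2 1 - γ 2 0 * γ 1 1 ≠ 0 := by
    rw [mul_comm (γ 2 0)]; exact hcc2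
  have hcc7 : γ 2 1 * γ 1 0 - γ 1 1 * γ 2 0 ≠ 0 := by
    rw [mul_comm (γ 2 1)]; exact hcc2
  refine ⟨?_, ?_, ?_⟩
  · simp only [_root_.map_div₀, ha', hb', hc']
    field_simp
    ring
  · simp only [_root_.map_div₀, hd', he', hc']
    field_simp
    ring
  · simp only [xPlus, hMat, wMat, Matrix.mul_fin_three]
    ext i j
    fin_cases i <;> fin_cases j <;>
      simp [Matrix.cons_val_two, Matrix.vecHead, Matrix.vecTail,
        _root_.map_div₀, map_neg, _root_.map_one, _root_.map_inv₀, _root_.map_mul, hinv, hθ]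
    · field_simp
      try ring
    · rw [hb', hc']
      field_simp
      ring
    · rw [hb', hc', hd']
      field_simp
      linear_combination γ 2 0 * hdet
    · field_simp
      try ring
    · rw [hc']
      field_simp
      ring
    · rw [hc', hd']
      field_simp
      ring
    · field_simp
      try ring
    · field_simp
      try ring
    · field_simp
      try ring
end

section
/- Let K/k be a quadratic field extension with nontrivial automorphism λ ↦ λ̄ and norm N(λ) = λλ̄, and let A be an abelian group. Suppose c : K× × K× → A is bimultiplicative, satisfies c(x, 1−x) = 1 for x ≠ 0,1 and c(x,−x) = 1 for x ≠ 0, and additionally satisfies c(s, u) = 1 whenever s ∈ k× and u ∈ K× has N(u) = 1. Then c(λ, λ̄) = 1 for every λ ∈ K×. -/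
/-- Let `K/k` be a quadratic extension with conjugation `conj` (here `k` is the
fixed field of `conj`) and let `c : K× × K× → A` be bimultiplicative, satisfying
`c(x,1−x) = 1` for `x ≠ 0,1`, `c(x,−x) = 1` for `x ≠ 0`, and `c(s,u) = 1`
whenever `s ∈ k×` and `N(u) = 1`.  Then `c(λ, λ̄) = 1` for every `λ ∈ K×`. -/
theorem stmt13 {K A : Type*} [Field K] [CommGroup A] (conj : K →+* K)
    (hinv : ∀ x : K, conj (conj x) = x) (h2 : (2 : K) ≠ 0)
    (c : K → K → A)
    (hmul_left : ∀ x x' y : K, x ≠ 0 → x' ≠ 0 → y ≠ 0 →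
      c (x * x') y = c x y * c x' y)
    (hmul_right : ∀ x y y' : K, x ≠ 0 → y ≠ 0 → y' ≠ 0 →
      c x (y * y') = c x y * c x y')
    (hsteinberg : ∀ x : K, x ≠ 0 → x ≠ 1 → c x (1 - x) = 1)
    (hneg : ∀ x : K, x ≠ 0 → c x (-x) = 1)
    (hnorm : ∀ s u : K, s ≠ 0 → conj s = s → u * conj u = 1 → c s u = 1) :
    ∀ lam : K, lam ≠ 0 → c lam (conj lam) = 1 := by
  have hconj0 : ∀ x : K, x ≠ 0 → conj x ≠ 0 := by
    intro x hx h
    apply hx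
    have := hinv x
    rw [h, map_zero] at this
    exact this.symm
  have hskew : ∀ x y : K, x ≠ 0 → y ≠ 0 → c x y * c y x = 1 := by
    intro x y hx hy
    have hxy := mul_ne_zero hx hy
    have h1 : c (x * y) (-(x * y)) = 1 := hneg _ hxy
    rw [hmul_left x y _ hx hy (neg_ne_zero.mpr hxy)] at h1
    have e1 : c x (-(x * y)) = c x y := by
      rw [show -(x * y) = (-x) * y by ring,
        hmul_right x (-x) y hx (neg_ne_zero.mpr hx) hy, hneg x hx, one_mul]
    have e2 : c y (-(x * y)) = c y x := by
      rw [show -(x * y) = x * (-y) by ring,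
        hmul_right y x (-y) hy hx (neg_ne_zero.mpr hy), hneg y hy, mul_one]
    rw [e1, e2] at h1
    exact h1
  intro lam hlam
  have hcl := hconj0 lam hlam
  by_cases hs : lam + conj lam = 0
  · have h' : conj lam = -lam := by linear_combination hs
    rw [h']
    exact hneg lam hlam
  · set s := lam + conj lam with hsdef
    have hs0 : s ≠ 0 := hs
    have hconjs : conj s = s := by
      rw [hsdef, map_add, hinv, add_comm]
    set l := lam / s with hldef
    have hl0 : l ≠ 0 := div_ne_zero hlam hs0
    have hclam : conj lam = s - lam := by rw [hsdef]; ring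
    have hconjl : conj l = 1 - l := by
      rw [hldef, map_div₀, hconjs, hclam, sub_div, div_self hs0]
    have hl1 : l ≠ 1 := by
      intro h
      apply hcl
      have hls : lam = s := by rwa [hldef, div_eq_one_iff_eq hs0] at h
      rw [hclam, ← hls, sub_self]
    have h1l : (1 : K) - l ≠ 0 := by rw [← hconjl]; exact hconj0 l hl0
    have hlam_eq : lam = s * l := by rw [hldef]; field_simp
    have hclam_eq : conj lam = s * (1 - l) := by
      rw [hclam, hldef]; field_simp
    have hcs1 : c s (-1) = 1 :=
      hnorm s (-1) hs0 hconjs (by rw [map_neg, map_one]; ring)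
    have hcss : c s s = 1 := by
      have h' := hneg s hs0
      rw [show -s = s * (-1) by ring,
        hmul_right s s (-1) hs0 hs0 (by norm_num), hcs1, mul_one] at h'
      exact h'
    have hconj1l : conj (1 - l) = l := by
      rw [map_sub, map_one, hconjl]; ring
    have hu : (l / (1 - l)) * conj (l / (1 - l)) = 1 := by
      rw [map_div₀, hconjl, hconj1l]
      field_simp
    have hceq : c s l = c s (1 - l) := by
      have h0 : c s (l / (1 - l)) = 1 := hnorm _ _ hs0 hconjs hu
      have h' : c s (l / (1 - l) * (1 - l)) = c s (l / (1 - l)) * c s (1 - l) :=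
        hmul_right s _ _ hs0 (div_ne_zero hl0 h1l) h1l
      rw [div_mul_cancel₀ _ h1l, h0, one_mul] at h'
      exact h'
    rw [hclam_eq, hlam_eq,
      hmul_left s l _ hs0 hl0 (mul_ne_zero hs0 h1l),
      hmul_right s s (1 - l) hs0 hs0 h1l,
      hmul_right l s (1 - l) hl0 hs0 h1l,
      hcss, hsteinberg l hl0 hl1, one_mul, mul_one, ← hceq]
    rw [mul_comm]
    exact hskew l s hl0 hs0
end
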